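/- Let B, Z: ℝ → ℝ be continuous with B(0) = Z(0) = 0, and suppose lim_{x → -∞} B(x)/x = a and lim_{x → -∞} Z(x)/x = b with a < b. Then D(Z,B) and R(Z,B) are well-defined and satisfy lim_{x → -∞} R(Z,B)(x)/x = a and lim_{x → -∞} D(Z,B)(x)/x = b. -/

import Mathlib

open Filter

/-- Queue length: `Q(Z,B)(y) = sup_{x ≤ y} [(B(y)-B(x)) - (Z(y)-Z(x))]`. -/
noncomputable def Qmap (Z B : ℝ → ℝ) (y : ℝ) : ℝ :=
  sSup ((fun x => (B y - B x) - (Z y - Z x)) '' Set.Iic y)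

/-- Departure map: `D(Z,B)(y) = Z(y) + Q(Z,B)(y) - Q(Z,B)(0)`. -/
noncomputable def Dmap (Z B : ℝ → ℝ) (y : ℝ) : ℝ :=
  Z y + Qmap Z B y - Qmap Z B 0

/-- Reflected-output map: `R(Z,B)(y) = B(y) + Q(Z,B)(0) - Q(Z,B)(y)`. -/
noncomputable def Rmap (Z B : ℝ → ℝ) (y : ℝ) : ℝ :=
  B y + Qmap Z B 0 - Qmap Z B y

/-!
With `f = B - Z`, the queue is `Q(y) = f(y) - m(y)`, where `m(y) = inf_{x ≤ y} f(x)` is the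
running infimum of `f`. Since `f(x)/x → a - b < 0`, `f` tends to `+∞` at `-∞`, so `m` is finite.
For `y → -∞`, every `x ≤ y` satisfies `f(x) ≥ (a - b + ε) x ≥ (a - b + ε) y` (the slope being
negative), while `m(y) ≤ f(y)`; hence `m(y)/y → a - b` as well. Then `R = Z + m + const` and
`D = B - m + const` have slopes `b + (a - b) = a` and `a - (a - b) = b`.
-/

open Set Topology

noncomputable def runningInf (f : ℝ → ℝ) (y : ℝ) : ℝ :=
  sInf (f '' Iic y)

section Slope

variable {f : ℝ → ℝ} {c : ℝ}

theorem tendsto_atBot_atTop_of_tendsto_div_of_neg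
    (hf : Tendsto (fun x => f x / x) atBot (𝓝 c)) (hc : c < 0) : Tendsto f atBot atTop :=
  (hf.neg_mul_atBot hc tendsto_id).congr' <| by
    filter_upwards [eventually_lt_atBot 0] with x hx using div_mul_cancel₀ _ hx.ne

theorem bddBelow_image_Iic_of_tendsto_atBot_atTop (hcont : Continuous f)
    (hf : Tendsto f atBot atTop) (y : ℝ) : BddBelow (f '' Iic y) := by
  obtain ⟨x₀, hx₀⟩ := eventually_atBot.1 (hf.eventually_ge_atTop 0)
  have hleft : BddBelow (f '' Iic x₀) := ⟨0, by rintro _ ⟨x, hx, rfl⟩; exact hx₀ x hx⟩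
  have hmid : BddBelow (f '' Icc x₀ y) := isCompact_Icc.bddBelow_image hcont.continuousOn
  exact (hleft.union hmid).mono <| by
    rw [← image_union]; exact image_mono Iic_subset_Iic_union_Icc

theorem tendsto_add_const_div_atBot {g : ℝ → ℝ} {L : ℝ}
    (hg : Tendsto (fun x => g x / x) atBot (𝓝 L)) (k : ℝ) :
    Tendsto (fun x => (g x + k) / x) atBot (𝓝 L) := by
  simpa [add_div] using hg.add (tendsto_id.const_div_atBot k)

theorem tendsto_runningInf_div_atBot (hf : Tendsto (fun x => f x / x) atBot (𝓝 c))
    (hc : c < 0) (hbdd : ∀ y, BddBelow (f '' Iic y)) :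
    Tendsto (fun y => runningInf f y / y) atBot (𝓝 c) := by
  refine tendsto_order.2 ⟨fun c' hc' => ?_, fun c' hc' => ?_⟩
  · filter_upwards [(tendsto_order.1 hf).1 c' hc', eventually_lt_atBot 0] with y hy hy0
    refine hy.trans_le (div_le_div_of_nonpos_of_le hy0.le ?_)
    exact csInf_le (hbdd y) (mem_image_of_mem f self_mem_Iic)
  · obtain ⟨d, hcd, hd⟩ := exists_between (lt_min hc' hc)
    obtain ⟨Y, hY⟩ := eventually_atBot.1
      ((tendsto_order.1 hf).2 d hcd |>.and (eventually_lt_atBot 0))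
    filter_upwards [eventually_le_atBot Y, eventually_lt_atBot 0] with y hyY hy0
    have hd0 : d < 0 := hd.trans_le (min_le_right _ _)
    have hlow : d * y ≤ runningInf f y := by
      refine le_csInf (image_nonempty.2 nonempty_Iic) ?_
      rintro _ ⟨x, hx, rfl⟩
      obtain ⟨hfx, hx0⟩ := hY x (hx.trans hyY)
      calc d * y ≤ d * x := mul_le_mul_of_nonpos_left hx hd0.le
        _ ≤ f x := (div_lt_iff_of_neg hx0).1 hfx |>.le
    calc runningInf f y / y ≤ d := (div_le_iff_of_neg hy0).2 hlow
      _ < c' := hd.trans_le (min_le_left _ _)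

end Slope

section Queue

variable (Z B : ℝ → ℝ) {y : ℝ}

theorem image_Iic_increment_sub_eq (y : ℝ) :
    (fun x => (B y - B x) - (Z y - Z x)) '' Iic y
      = (fun t => (B - Z) y - t) '' ((B - Z) '' Iic y) := by
  rw [image_image]
  exact image_congr fun x _ => by simp only [Pi.sub_apply]; ring

theorem bddAbove_image_Iic_increment_sub (hbdd : BddBelow ((B - Z) '' Iic y)) :
    BddAbove ((fun x => (B y - B x) - (Z y - Z x)) '' Iic y) := by
  rw [image_Iic_increment_sub_eq]
  exact Antitone.map_bddBelow (fun _ _ h => sub_le_sub_left h _) hbdd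

theorem Qmap_eq_sub_runningInf (hbdd : BddBelow ((B - Z) '' Iic y)) :
    Qmap Z B y = (B - Z) y - runningInf (B - Z) y := by
  rw [Qmap, image_Iic_increment_sub_eq, runningInf]
  exact (Antitone.map_csInf_of_continuousAt (continuous_sub_left _).continuousAt
    (fun _ _ h => sub_le_sub_left h _) (image_nonempty.2 nonempty_Iic) hbdd).symm

end Queue

theorem stmt6_general (B Z : ℝ → ℝ) (hB : Continuous B) (hZ : Continuous Z)
    (a b : ℝ) (hab : a < b)
    (ha : Tendsto (fun x => B x / x) atBot (nhds a))
    (hb : Tendsto (fun x => Z x / x) atBot (nhds b)) :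
    (∀ y : ℝ, BddAbove ((fun x => (B y - B x) - (Z y - Z x)) '' Set.Iic y)) ∧
    Tendsto (fun x => Rmap Z B x / x) atBot (nhds a) ∧
    Tendsto (fun x => Dmap Z B x / x) atBot (nhds b) := by
  set f := B - Z with hf_def
  have hf : Tendsto (fun x => f x / x) atBot (𝓝 (a - b)) := by
    simpa only [hf_def, Pi.sub_apply, sub_div] using ha.sub hb
  have hneg : a - b < 0 := sub_neg.2 hab
  have hbdd := bddBelow_image_Iic_of_tendsto_atBot_atTop (hB.sub hZ)
    (tendsto_atBot_atTop_of_tendsto_div_of_neg hf hneg)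
  have hm := tendsto_runningInf_div_atBot hf hneg hbdd
  have hQ y := Qmap_eq_sub_runningInf Z B (hbdd y)
  refine ⟨fun y => bddAbove_image_Iic_increment_sub Z B (hbdd y), ?_, ?_⟩
  · have h := tendsto_add_const_div_atBot (g := Z + runningInf f)
      (by simpa only [Pi.add_apply, add_div, add_sub_cancel] using hb.add hm) (Qmap Z B 0)
    exact h.congr fun y => by rw [Rmap, hQ y]; simp only [hf_def, Pi.add_apply, Pi.sub_apply]; ring
  · have h := tendsto_add_const_div_atBot (g := B - runningInf f)
      (by simpa only [Pi.sub_apply, sub_div, sub_sub_cancel] using ha.sub hm) (-Qmap Z B 0)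
    exact h.congr fun y => by rw [Dmap, hQ y]; simp only [hf_def, Pi.sub_apply]; ring

/-- If `B(x)/x → a` and `Z(x)/x → b` as `x → -∞` with `a < b`, then `D(Z,B)` and
`R(Z,B)` are well-defined (the defining suprema are finite) and have slopes `b` and `a` at `-∞`. -/
theorem stmt6 (B Z : ℝ → ℝ) (hB : Continuous B) (hZ : Continuous Z)
    (hB0 : B 0 = 0) (hZ0 : Z 0 = 0) (a b : ℝ) (hab : a < b)
    (ha : Tendsto (fun x => B x / x) atBot (nhds a))
    (hb : Tendsto (fun x => Z x / x) atBot (nhds b)) :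
    (∀ y : ℝ, BddAbove ((fun x => (B y - B x) - (Z y - Z x)) '' Set.Iic y)) ∧
    Tendsto (fun x => Rmap Z B x / x) atBot (nhds a) ∧
    Tendsto (fun x => Dmap Z B x / x) atBot (nhds b) :=
  stmt6_general B Z hB hZ a b hab ha hb
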